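/- arXiv:2210.17329 — 8 statements merged into one kernel-verified Lean document; each statement's English description precedes it below -/
import Mathlib

section
/- Define a_0' = a_1' = 1 and a_k' = k·a_{k−1}' + (k²−k)/2 · a_{k−2}' for k ≥ 2. Then a_k' = k! · a_k for all k ≥ 0, where a_k = ((1+√3)^{k+1} − (1−√3)^{k+1})/(2^{k+1}√3). -/
/-- The sequence `a_k = ((1+√3)^(k+1) − (1−√3)^(k+1)) / (2^(k+1)·√3)`. -/
noncomputable def aSeq (k : ℕ) : ℝ :=
  ((1 + Real.sqrt 3) ^ (k + 1) - (1 - Real.sqrt 3) ^ (k + 1)) /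
    (2 ^ (k + 1) * Real.sqrt 3)

/-!
Dividing the recurrence for `a'` by `k!` turns it into `b_k = b_{k-1} + b_{k-2} / 2`, whose
characteristic roots are `(1 ± √3) / 2`; the Binet-type formula `aSeq` solves it with
`aSeq 0 = aSeq 1 = 1`.
-/

lemma pow_add_two_of_sq_eq {R : Type*} [CommRing R] {x c : R} (hx : x ^ 2 = x + c) (n : ℕ) :
    x ^ (n + 2) = x ^ (n + 1) + c * x ^ n := by
  rw [pow_add, hx]
  ring

lemma aSeq_eq_binet (k : ℕ) :
    aSeq k = (((1 + √3) / 2) ^ (k + 1) - ((1 - √3) / 2) ^ (k + 1)) / √3 := by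
  rw [aSeq, div_pow, div_pow, ← sub_div, div_div]

lemma aSeq_zero : aSeq 0 = 1 := by
  have : √3 ≠ 0 := by positivity
  rw [aSeq_eq_binet]
  field_simp
  ring

lemma aSeq_one : aSeq 1 = 1 := by
  have : √3 ≠ 0 := by positivity
  rw [aSeq_eq_binet]
  field_simp
  ring

lemma aSeq_add_two (k : ℕ) : aSeq (k + 2) = aSeq (k + 1) + aSeq k / 2 := by
  have h3 : √3 ^ 2 = 3 := Real.sq_sqrt (by norm_num)
  have hφ : ((1 + √3) / 2) ^ 2 = (1 + √3) / 2 + 1 / 2 := by linear_combination h3 / 4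
  have hψ : ((1 - √3) / 2) ^ 2 = (1 - √3) / 2 + 1 / 2 := by linear_combination h3 / 4
  simp only [aSeq_eq_binet, pow_add_two_of_sq_eq hφ, pow_add_two_of_sq_eq hψ]
  ring

lemma eq_factorial_mul_of_rec {K : Type*} [Field K] {a b : ℕ → K}
    (hb : ∀ k, b (k + 2) = b (k + 1) + b k / 2) (h0 : a 0 = b 0) (h1 : a 1 = b 1)
    (ha : ∀ k : ℕ, 2 ≤ k → a k = k * a (k - 1) + ((k : K) ^ 2 - k) / 2 * a (k - 2)) :
    ∀ k, a k = k.factorial * b k := by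
  refine Nat.twoStepInduction (by simpa using h0) (by simpa using h1) fun n ih0 ih1 => ?_
  rw [ha (n + 2) le_add_self, Nat.add_sub_cancel, show n + 2 - 1 = n + 1 from rfl, ih0, ih1,
    hb]
  push_cast [Nat.factorial_succ]
  ring

theorem stmt_5 (a' : ℕ → ℝ) (h0 : a' 0 = 1) (h1 : a' 1 = 1)
    (hrec : ∀ k : ℕ, 2 ≤ k →
      a' k = k * a' (k - 1) + ((k : ℝ) ^ 2 - k) / 2 * a' (k - 2)) :
    ∀ k : ℕ, a' k = Nat.factorial k * aSeq k :=
  eq_factorial_mul_of_rec aSeq_add_two (h0.trans aSeq_zero.symm) (h1.trans aSeq_one.symm) hrec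
end

section
/- Let τ_0 = 1 and τ_k = Σ_{j=0}^{k−1} (k−j+1)·τ_j for k ≥ 1. Then for k ≥ 1, τ_k = ((2+√2)^{k+1} − (2−√2)^{k+1})/(4√2). -/
/-!
Taking second differences of the defining sum gives the linear recurrence
`τ (k + 2) = 4 τ (k + 1) - 2 τ k` for `k ≥ 1`, whose characteristic roots are `2 ± √2`.
The Binet-type expression satisfies the same recurrence and agrees with `τ` at `k = 1, 2`
(where `τ 1 = 2`, `τ 2 = 7`).
-/

open Finset

section WeightedSum

variable {R : Type*} [CommRing R]

def weightedSum (f : ℕ → R) (k : ℕ) : R :=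
  ∑ j ∈ range k, ((k : R) - j + 1) * f j

theorem weightedSum_succ (f : ℕ → R) (k : ℕ) :
    weightedSum f (k + 1) = weightedSum f k + 2 * f k + ∑ j ∈ range k, f j := by
  have hweight : ∀ j ∈ range k, (((k + 1 : ℕ) : R) - j + 1) * f j = ((k : R) - j + 1) * f j + f j :=
    fun j _ => by push_cast; ring
  rw [weightedSum, sum_range_succ, sum_congr rfl hweight, sum_add_distrib, weightedSum]
  push_cast
  ring

theorem weightedSum_add_two (f : ℕ → R) (k : ℕ) :
    weightedSum f (k + 2) =
      2 * weightedSum f (k + 1) - weightedSum f k + 2 * f (k + 1) - f k := by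
  rw [weightedSum_succ f (k + 1), weightedSum_succ f k, sum_range_succ]
  ring

end WeightedSum

theorem eq_of_second_order_recurrence_of_eq_init {R : Type*} [Semiring R] {a b : ℕ → R} {c d : R} {m : ℕ}
    (ha : ∀ n, m ≤ n → a (n + 2) = c * a (n + 1) + d * a n)
    (hb : ∀ n, m ≤ n → b (n + 2) = c * b (n + 1) + d * b n)
    (h₀ : a m = b m) (h₁ : a (m + 1) = b (m + 1)) :
    ∀ n, m ≤ n → a n = b n := by
  suffices ∀ n, m ≤ n → a n = b n ∧ a (n + 1) = b (n + 1) from fun n hn => (this n hn).1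
  intro n hn
  induction n, hn using Nat.le_induction with
  | base => exact ⟨h₀, h₁⟩
  | succ n hn ih => exact ⟨ih.2, by rw [ha n hn, hb n hn, ih.1, ih.2]⟩

theorem pow_sub_pow_div_add_two {K : Type*} [Field K] {α β c d : K} (z : K)
    (hα : α ^ 2 = c * α + d) (hβ : β ^ 2 = c * β + d) (n : ℕ) :
    (α ^ (n + 2) - β ^ (n + 2)) / z =
      c * ((α ^ (n + 1) - β ^ (n + 1)) / z) + d * ((α ^ n - β ^ n) / z) := by
  linear_combination (α ^ n * hα - β ^ n * hβ) / z

theorem stmt_6 (τ : ℕ → ℝ) (h0 : τ 0 = 1)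
    (hrec : ∀ k : ℕ, 1 ≤ k →
      τ k = ∑ j ∈ Finset.range k, ((k : ℝ) - j + 1) * τ j) :
    ∀ k : ℕ, 1 ≤ k →
      τ k = ((2 + Real.sqrt 2) ^ (k + 1) - (2 - Real.sqrt 2) ^ (k + 1)) /
        (4 * Real.sqrt 2) := by
  have hτ : ∀ k, 1 ≤ k → τ k = weightedSum τ k := hrec
  have hτrec : ∀ k, 1 ≤ k → τ (k + 2) = 4 * τ (k + 1) + (-2) * τ k := by
    intro k hk
    have h := weightedSum_add_two τ k
    rw [← hτ (k + 2) (by omega), ← hτ (k + 1) (by omega), ← hτ k hk] at h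
    linear_combination h
  have hτ₁ : τ 1 = 2 := by norm_num [hτ 1, weightedSum, h0]
  have hτ₂ : τ 2 = 7 := by norm_num [hτ 2, weightedSum, sum_range_succ, h0, hτ₁]
  have hs : Real.sqrt 2 ^ 2 = 2 := Real.sq_sqrt (by norm_num)
  refine eq_of_second_order_recurrence_of_eq_init hτrec (fun n _ => ?_) ?_ ?_
  · exact pow_sub_pow_div_add_two _ (by linear_combination hs) (by linear_combination hs) (n + 1)
  · rw [hτ₁, eq_div_iff (by positivity)]
    ring
  · rw [hτ₂, eq_div_iff (by positivity)]
    linear_combination (-2 * Real.sqrt 2) * hs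
end

section
/- Let τ_0 = 1 and τ_k = Σ_{j=0}^{k−1} (k−j+1)·τ_j for k ≥ 1. Then τ_k ≤ (2+√2)^k for all k ≥ 0. -/
/-!
Comparison with a supersolution: by strong induction, `τ k ≤ σ k` for every `σ` with
`σ 0 ≥ 1` and `σ k ≥ ∑_{j<k} (k - j + 1) σ j`. For `σ k = ρ ^ k`, where `ρ = 2 + √2` is a root of
`ρ ^ 2 = 4ρ - 2`, the weighted sum has the closed form `ρ ^ k - 1 - k (ρ - 3)`, which is at most
`ρ ^ k` because `ρ ≥ 3`.
-/

open Finset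

section ClosedForm

variable {R : Type*} [CommRing R] {ρ : R}

/-- `(ρ - 1)(ρ - 3) = 1` turns the geometric sum formula into a division-free identity. -/
lemma geom_sum_eq_of_sq_eq (hρ : ρ ^ 2 = 4 * ρ - 2) (k : ℕ) :
    ∑ j ∈ range k, ρ ^ j = (ρ - 3) * (ρ ^ k - 1) := by
  linear_combination (ρ - 3) * geom_sum_mul ρ k - (∑ j ∈ range k, ρ ^ j) * hρ

lemma sum_range_mul_pow_eq_of_sq_eq (hρ : ρ ^ 2 = 4 * ρ - 2) (k : ℕ) :
    ∑ j ∈ range k, ((k : R) - j + 1) * ρ ^ j = ρ ^ k - 1 - k * (ρ - 3) := by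
  induction k with
  | zero => simp
  | succ k ih =>
    have hsplit : ∑ j ∈ range (k + 1), (((k + 1 : ℕ) : R) - j + 1) * ρ ^ j
        = ∑ j ∈ range k, ((k : R) - j + 1) * ρ ^ j + ∑ j ∈ range k, ρ ^ j + 2 * ρ ^ k := by
      rw [sum_range_succ, ← sum_add_distrib]
      congr 1
      · exact sum_congr rfl fun j _ => by push_cast; ring
      · push_cast; ring
    rw [hsplit, ih, geom_sum_eq_of_sq_eq hρ]
    push_cast
    ring

end ClosedForm

lemma le_of_sum_range_mul_le (τ σ : ℕ → ℝ) (h0 : τ 0 ≤ σ 0)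
    (hτ : ∀ k, 1 ≤ k → τ k ≤ ∑ j ∈ range k, ((k : ℝ) - j + 1) * τ j)
    (hσ : ∀ k, 1 ≤ k → ∑ j ∈ range k, ((k : ℝ) - j + 1) * σ j ≤ σ k) :
    ∀ k, τ k ≤ σ k := by
  intro k
  induction k using Nat.strong_induction_on with
  | _ k ih =>
    rcases Nat.eq_zero_or_pos k with rfl | hk
    · exact h0
    refine (hτ k hk).trans (le_trans (sum_le_sum fun j hj => ?_) (hσ k hk))
    have hjk : j < k := mem_range.mp hj
    have hcoef : (0 : ℝ) ≤ k - j + 1 := by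
      have : (j : ℝ) ≤ k := by exact_mod_cast hjk.le
      linarith
    exact mul_le_mul_of_nonneg_left (ih j hjk) hcoef

theorem stmt_7 (τ : ℕ → ℝ) (h0 : τ 0 = 1)
    (hrec : ∀ k : ℕ, 1 ≤ k →
      τ k = ∑ j ∈ Finset.range k, ((k : ℝ) - j + 1) * τ j) :
    ∀ k : ℕ, τ k ≤ (2 + Real.sqrt 2) ^ k := by
  have hsq : Real.sqrt 2 ^ 2 = 2 := Real.sq_sqrt (by norm_num)
  have hρ : (2 + Real.sqrt 2) ^ 2 = 4 * (2 + Real.sqrt 2) - 2 := by linear_combination hsq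
  have hρ3 : (0 : ℝ) ≤ 2 + Real.sqrt 2 - 3 := by
    nlinarith [Real.sqrt_nonneg 2]
  refine le_of_sum_range_mul_le τ _ (by simp [h0]) (fun k hk => (hrec k hk).le) fun k _ => ?_
  rw [sum_range_mul_pow_eq_of_sq_eq hρ]
  linarith [mul_nonneg (Nat.cast_nonneg k : (0 : ℝ) ≤ k) hρ3]
end

section
/- Let 0 < p ≤ q < ∞ and let (a_i)_{i≥1} be a sequence of real numbers with |a_1| ≥ |a_2| ≥ ⋯ and Σ_{i≥1} |a_i|^p < ∞. Then for every s ≥ 1, (Σ_{i>s} |a_i|^q)^{1/q} ≤ (Σ_{i≥1} |a_i|^p)^{1/p} · s^{−1/p+1/q}. -/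
/-!
Write `A = ∑ |a i| ^ p`. Monotonicity gives `s |a s| ^ p ≤ ∑_{i < s} |a i| ^ p ≤ A`, i.e.
`|a s| ≤ (A / s) ^ (1 / p)`. On the tail, `|a i| ^ q ≤ |a s| ^ (q - p) |a i| ^ p`, so
`∑_{i ≥ s} |a i| ^ q ≤ (A / s) ^ ((q - p) / p) A`, and taking `q`-th roots gives the bound.
-/

open Real

section Antitone

variable {b : ℕ → ℝ} {p q : ℝ}

theorem Antitone.natCast_mul_rpow_le_tsum (hb0 : ∀ i, 0 ≤ b i) (hb : Antitone b) (hp : 0 ≤ p)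
    (hsum : Summable fun i => b i ^ p) (s : ℕ) : s * b s ^ p ≤ ∑' i, b i ^ p :=
  calc (s : ℝ) * b s ^ p = ∑ _i ∈ Finset.range s, b s ^ p := by simp
    _ ≤ ∑ i ∈ Finset.range s, b i ^ p := Finset.sum_le_sum fun i hi =>
        rpow_le_rpow (hb0 s) (hb (Finset.mem_range.mp hi).le) hp
    _ ≤ ∑' i, b i ^ p := hsum.sum_le_tsum _ fun i _ => rpow_nonneg (hb0 i) p

theorem Antitone.le_rpow_inv_tsum_div (hb0 : ∀ i, 0 ≤ b i) (hb : Antitone b) (hp : 0 < p)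
    (hsum : Summable fun i => b i ^ p) {s : ℕ} (hs : 0 < s) :
    b s ≤ ((∑' i, b i ^ p) / s) ^ p⁻¹ := by
  have hA : 0 ≤ ∑' i, b i ^ p := tsum_nonneg fun i => rpow_nonneg (hb0 i) p
  rw [le_rpow_inv_iff_of_pos (hb0 s) (by positivity) hp, le_div_iff₀' (by positivity)]
  exact hb.natCast_mul_rpow_le_tsum hb0 hp.le hsum s

theorem Antitone.tsum_tail_rpow_le (hb0 : ∀ i, 0 ≤ b i) (hb : Antitone b) (hp : 0 < p)
    (hpq : p ≤ q) (hsum : Summable fun i => b i ^ p) (s : ℕ) :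
    ∑' i, b (s + i) ^ q ≤ b s ^ (q - p) * ∑' i, b i ^ p := by
  have hterm (i : ℕ) : b (s + i) ^ q ≤ b s ^ (q - p) * b (s + i) ^ p :=
    calc b (s + i) ^ q = b (s + i) ^ (q - p) * b (s + i) ^ p := by
          rw [← rpow_add' (hb0 _) (by linarith), sub_add_cancel]
      _ ≤ b s ^ (q - p) * b (s + i) ^ p :=
          mul_le_mul_of_nonneg_right
            (rpow_le_rpow (hb0 _) (hb (Nat.le_add_right s i)) (sub_nonneg.2 hpq))
            (rpow_nonneg (hb0 _) p)
  have htail : Summable fun i => b (s + i) ^ p := hsum.comp_injective (add_right_injective s)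
  calc ∑' i, b (s + i) ^ q ≤ ∑' i, b s ^ (q - p) * b (s + i) ^ p :=
        (Summable.of_nonneg_of_le (fun i => rpow_nonneg (hb0 _) q) hterm
          (htail.mul_left _)).tsum_le_tsum hterm (htail.mul_left _)
    _ = b s ^ (q - p) * ∑' i, b (s + i) ^ p := tsum_mul_left
    _ ≤ b s ^ (q - p) * ∑' i, b i ^ p :=
        mul_le_mul_of_nonneg_left (tsum_comp_le_tsum_of_inj hsum
          (fun i => rpow_nonneg (hb0 i) p) (add_right_injective s)) (rpow_nonneg (hb0 s) _)

end Antitone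

theorem rpow_stechkin_identity {A s p q : ℝ} (hA : 0 ≤ A) (hs : 0 < s) (hp : 0 < p)
    (hq : 0 < q) :
    (((A / s) ^ p⁻¹) ^ (q - p) * A) ^ (1 / q) = A ^ (1 / p) * s ^ (-1 / p + 1 / q) := by
  have hqp : (q - p) / p + 1 ≠ 0 := by
    rw [div_add_one hp.ne', sub_add_cancel]; exact div_ne_zero hq.ne' hp.ne'
  rw [← rpow_mul (div_nonneg hA hs.le), ← div_eq_inv_mul, div_rpow hA hs.le,
    div_mul_eq_mul_div, ← rpow_add_one' hA hqp, div_rpow (rpow_nonneg hA _) (rpow_nonneg hs.le _),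
    ← rpow_mul hA, ← rpow_mul hs.le, div_eq_mul_inv _ (s ^ _), ← rpow_neg hs.le]
  congr 2 <;> field_simp <;> ring

/-- Stechkin's lemma. The sequence `a` is indexed so that `a i` corresponds to
`a_{i+1}` in the usual `1`-based indexing; thus `∑' i, |a (s + i)| ^ q` is the
tail sum `Σ_{i > s} |a_i|^q`. -/
theorem stmt_8 (p q : ℝ) (hp : 0 < p) (hpq : p ≤ q) (a : ℕ → ℝ)
    (hmono : ∀ i : ℕ, |a (i + 1)| ≤ |a i|)
    (hsum : Summable fun i : ℕ => |a i| ^ p)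
    (s : ℕ) (hs : 1 ≤ s) :
    (∑' i : ℕ, |a (s + i)| ^ q) ^ (1 / q) ≤
      (∑' i : ℕ, |a i| ^ p) ^ (1 / p) * (s : ℝ) ^ (-1 / p + 1 / q) := by
  have hq : 0 < q := hp.trans_le hpq
  have hb0 (i : ℕ) : 0 ≤ |a i| := abs_nonneg _
  have hb : Antitone fun i => |a i| := antitone_nat_of_succ_le hmono
  set A := ∑' i, |a i| ^ p
  have hA : 0 ≤ A := tsum_nonneg fun i => rpow_nonneg (hb0 i) p
  calc (∑' i, |a (s + i)| ^ q) ^ (1 / q) ≤ (((A / s) ^ p⁻¹) ^ (q - p) * A) ^ (1 / q) := by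
        refine rpow_le_rpow (tsum_nonneg fun i => rpow_nonneg (hb0 _) q) ?_ (by positivity)
        calc ∑' i, |a (s + i)| ^ q ≤ |a s| ^ (q - p) * A :=
              hb.tsum_tail_rpow_le hb0 hp hpq hsum s
          _ ≤ ((A / s) ^ p⁻¹) ^ (q - p) * A :=
            mul_le_mul_of_nonneg_right (rpow_le_rpow (hb0 s)
              (hb.le_rpow_inv_tsum_div hb0 hp hsum hs) (sub_nonneg.2 hpq)) hA
    _ = A ^ (1 / p) * (s : ℝ) ^ (-1 / p + 1 / q) :=
        rpow_stechkin_identity hA (by positivity) hp hq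
end

section
/- For any finitely supported multi-index m with nonnegative integer entries, Σ_{w ≤ m} C(m,w) · |w|! · |m−w|! = (|m|+1)!, where C(m,w) is the product of componentwise binomial coefficients and |w| is the sum of entries of w. -/
/-- Order (total degree) of a finitely supported multi-index. -/
def deg (m : ℕ →₀ ℕ) : ℕ := m.sum fun _ k => k

/-- Multivariate binomial coefficient `C(m, w) = Π_i C(m_i, w_i)`. -/
def mchoose (m w : ℕ →₀ ℕ) : ℕ := ∏ i ∈ m.support, (m i).choose (w i)

/-!
Grouping the multi-indices `w ≤ m` by `k = |w|`, the multivariate Vandermonde identity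
`∑_{|w| = k} C(m, w) = C(|m|, k)`, read off by comparing coefficients in
`∑_{w ≤ m} C(m, w) x^|w| = ∏_i (x + 1)^{m_i} = (x + 1)^|m|`, turns the sum into
`∑_{k ≤ |m|} C(|m|, k) k! (|m| - k)! = (|m| + 1) · |m|!`.
-/

open Finset

theorem Finsupp.prod_sum_Iic {ι R : Type*} [DecidableEq ι] [CommSemiring R] (m : ι →₀ ℕ)
    (f : ι → ℕ → R) :
    ∏ i ∈ m.support, ∑ j ∈ Iic (m i), f i j =
      ∑ w ∈ Iic m, ∏ i ∈ m.support, f i (w i) := by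
  rw [Finset.prod_sum]
  refine sum_nbij' (fun p => indicator m.support p) (fun w i _ => w i) ?_ ?_ ?_ ?_ ?_
  · intro p hp
    refine Finset.mem_Iic.mpr fun i => ?_
    simp only [Finset.mem_pi, Finset.mem_Iic] at hp
    by_cases hi : i ∈ m.support
    · simpa [indicator_of_mem hi] using hp i hi
    · simp [indicator_of_notMem hi]
  · intro w hw
    simp [Finset.mem_Iic.mp hw _]
  · intro p _
    funext i hi
    simp [indicator_of_mem hi]
  · intro w hw
    ext i
    by_cases hi : i ∈ m.support
    · simp [indicator_of_mem hi]
    · rw [indicator_of_notMem hi]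
      exact (Nat.eq_zero_of_le_zero (notMem_support_iff.mp hi ▸ Finset.mem_Iic.mp hw i)).symm
  · intro p _
    exact (Finset.prod_congr rfl fun i _ => by simp [indicator_of_mem i.2]).trans
      (prod_attach m.support fun i => f i (indicator m.support p i))

lemma deg_eq_sum_of_le {w m : ℕ →₀ ℕ} (h : w ≤ m) : deg w = ∑ i ∈ m.support, w i :=
  Finsupp.sum_of_support_subset w (Finsupp.support_mono h) _ fun _ _ => rfl

lemma deg_add_deg_tsub {w m : ℕ →₀ ℕ} (h : w ≤ m) : deg w + deg (m - w) = deg m := by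
  change w.degree + (m - w).degree = m.degree
  rw [← map_add, add_tsub_cancel_of_le h]

theorem sum_mchoose_mul_pow_deg {R : Type*} [CommSemiring R] (m : ℕ →₀ ℕ) (x : R) :
    ∑ w ∈ Iic m, (mchoose m w : R) * x ^ deg w = (x + 1) ^ deg m := by
  have binomial (n : ℕ) : (x + 1) ^ n = ∑ j ∈ Iic n, x ^ j * (n.choose j : R) := by
    simp [add_pow, Nat.range_succ_eq_Iic]
  calc ∑ w ∈ Iic m, (mchoose m w : R) * x ^ deg w
      = ∑ w ∈ Iic m, ∏ i ∈ m.support, x ^ w i * ((m i).choose (w i) : R) := by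
        refine sum_congr rfl fun w hw => ?_
        rw [prod_mul_distrib, prod_pow_eq_pow_sum, deg_eq_sum_of_le (mem_Iic.mp hw), mchoose,
          Nat.cast_prod, mul_comm]
    _ = ∏ i ∈ m.support, (x + 1) ^ m i := by
        simp only [binomial, Finsupp.prod_sum_Iic]
    _ = (x + 1) ^ deg m := prod_pow_eq_pow_sum _ _ _

theorem sum_mchoose_of_deg_eq (m : ℕ →₀ ℕ) (k : ℕ) :
    ∑ w ∈ Iic m with deg w = k, mchoose m w = (deg m).choose k := by
  have hcoeff := congrArg (Polynomial.coeff · k)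
    (sum_mchoose_mul_pow_deg m (Polynomial.X : Polynomial ℕ))
  simp only [Polynomial.coeff_X_add_one_pow, Nat.cast_id, Polynomial.finsetSum_coeff] at hcoeff
  rw [← hcoeff, sum_filter]
  refine sum_congr rfl fun w _ => ?_
  rw [← Polynomial.C_eq_natCast, Polynomial.coeff_C_mul_X_pow, Nat.cast_id]
  exact if_congr eq_comm rfl rfl

theorem stmt_10 (m : ℕ →₀ ℕ) :
    ∑ w ∈ Finset.Iic m,
        mchoose m w * Nat.factorial (deg w) * Nat.factorial (deg (m - w))
      = Nat.factorial (deg m + 1) := by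
  have deg_mem_range (w : ℕ →₀ ℕ) (hw : w ∈ Iic m) : deg w ∈ range (deg m + 1) := by
    rw [mem_range, Nat.lt_succ_iff, ← deg_add_deg_tsub (mem_Iic.mp hw)]
    exact Nat.le_add_right _ _
  calc ∑ w ∈ Iic m, mchoose m w * (deg w).factorial * (deg (m - w)).factorial
      = ∑ k ∈ range (deg m + 1), ∑ w ∈ Iic m with deg w = k,
          mchoose m w * k.factorial * (deg m - k).factorial := by
        rw [← sum_fiberwise_of_maps_to deg_mem_range]
        refine sum_congr rfl fun k _ => sum_congr rfl fun w hw => ?_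
        obtain ⟨hwm, rfl⟩ := mem_filter.mp hw
        rw [← deg_add_deg_tsub (mem_Iic.mp hwm), Nat.add_sub_cancel_left]
    _ = ∑ k ∈ range (deg m + 1), (deg m).choose k * k.factorial * (deg m - k).factorial := by
        simp only [← sum_mul, sum_mchoose_of_deg_eq]
    _ = (deg m + 1).factorial := by
        rw [sum_congr rfl fun k hk => Nat.choose_mul_factorial_mul_factorial
          (Nat.lt_succ_iff.mp (mem_range.mp hk)), sum_const, card_range, smul_eq_mul,
          Nat.factorial_succ]
end

section
/- Let (τ_k) be defined by τ_0 = 1, τ_k = Σ_{j=0}^{k−1}(k−j+1)τ_j for k ≥ 1. Then for any finitely supported nonzero multi-index m, Σ_{w ≤ m, w ≠ m} τ_{|w|} · |w|! · (|m|−|w|+1)! · C(m,w) = τ_{|m|} · |m|!. -/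
open Finset

lemma deg_add (u v : ℕ →₀ ℕ) : deg (u + v) = deg u + deg v := map_add Finsupp.degree u v

lemma deg_single (a k : ℕ) : deg (.single a k) = k := Finsupp.degree_single a k

lemma deg_mono : Monotone deg := Finsupp.degree_mono

lemma deg_eq_zero_iff {m : ℕ →₀ ℕ} : deg m = 0 ↔ m = 0 := Finsupp.degree_eq_zero_iff m

lemma mchoose_self (m : ℕ →₀ ℕ) : mchoose m m = 1 :=
  prod_eq_one fun _ _ => Nat.choose_self _

lemma mchoose_single_add {a b k : ℕ} {f v : ℕ →₀ ℕ} (hb : b ≠ 0) (ha : f a = 0) (hv : v a = 0) :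
    mchoose (.single a b + f) (.single a k + v) = b.choose k * mchoose f v := by
  have haf : a ∉ f.support := Finsupp.notMem_support_iff.2 ha
  rw [mchoose, Finsupp.support_single_add haf hb, prod_cons]
  congr 1
  · simp [ha, hv]
  · refine prod_congr rfl fun i hi => ?_
    have hai : a ≠ i := fun h => haf (h ▸ hi)
    simp [hai]

theorem Finsupp.sum_Iic_single_add {ι M : Type*} [DecidableEq ι] [AddCommMonoid M]
    {a : ι} {b : ℕ} {f : ι →₀ ℕ} (ha : f a = 0) (g : (ι →₀ ℕ) → M) :
    ∑ w ∈ Iic (single a b + f), g w = ∑ k ∈ Iic b, ∑ v ∈ Iic f, g (single a k + v) := by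
  rw [← sum_product']
  refine sum_nbij' (fun w => (w a, w.erase a)) (fun p => single a p.1 + p.2) ?_ ?_ ?_ ?_ ?_
  · intro w hw
    simp only [mem_Iic, mem_product] at hw ⊢
    refine ⟨by simpa [ha] using hw a, fun i => ?_⟩
    rcases eq_or_ne i a with rfl | hi
    · simp
    · simpa [hi, single_apply, Ne.symm hi] using hw i
  · intro p hp
    simp only [mem_Iic, mem_product] at hp ⊢
    exact add_le_add (single_le_single.2 hp.1) hp.2
  · intro w _
    exact single_add_erase a w
  · intro p hp
    simp only [mem_Iic, mem_product] at hp
    have hpa : p.2 a = 0 := Nat.le_zero.1 (ha ▸ hp.2 a)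
    ext : 1
    · simp [hpa]
    · simp [erase_add, hpa, erase_of_notMem_support]
  · intro w _
    exact congrArg g (single_add_erase a w).symm

section Vandermonde

open Polynomial

theorem sum_Iic_mchoose_mul_X_pow (m : ℕ →₀ ℕ) :
    ∑ w ∈ Iic m, (mchoose m w : ℕ[X]) * X ^ deg w = (1 + X) ^ deg m := by
  induction m using Finsupp.induction with
  | zero =>
    rw [← bot_eq_zero, Iic_bot, bot_eq_zero]
    simp [deg, mchoose]
  | single_add a b f ha hb ih =>
    rw [Finsupp.notMem_support_iff] at ha
    rw [Finsupp.sum_Iic_single_add ha, deg_add, pow_add, ← ih, deg_single, add_comm 1 X, add_pow,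
      ← Nat.range_succ_eq_Iic, sum_mul]
    refine sum_congr rfl fun k _ => ?_
    rw [mul_sum]
    refine sum_congr rfl fun v hv => ?_
    have hva : v a = 0 := Nat.le_zero.1 (ha ▸ mem_Iic.1 hv a)
    rw [mchoose_single_add hb ha hva, deg_add, deg_single]
    push_cast
    ring

theorem sum_Iic_mchoose_of_deg_eq (m : ℕ →₀ ℕ) (j : ℕ) :
    ∑ w ∈ Iic m with deg w = j, mchoose m w = (deg m).choose j := by
  have := congrArg (coeff · j) (sum_Iic_mchoose_mul_X_pow m)
  simpa [finsetSum_coeff, coeff_X_pow, coeff_one_add_X_pow, sum_filter, eq_comm] using this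

end Vandermonde

theorem sum_Iic_mchoose_smul {M : Type*} [AddCommMonoid M] (m : ℕ →₀ ℕ) (F : ℕ → M) :
    ∑ w ∈ Iic m, mchoose m w • F (deg w) = ∑ j ∈ range (deg m + 1), (deg m).choose j • F j := by
  rw [← sum_fiberwise_of_maps_to (g := deg) (t := range (deg m + 1))]
  · refine sum_congr rfl fun j _ => ?_
    rw [← sum_Iic_mchoose_of_deg_eq, sum_smul]
    exact sum_congr rfl fun w hw => by rw [(mem_filter.1 hw).2]
  · intro w hw
    exact mem_range_succ_iff.2 (deg_mono (mem_Iic.1 hw))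

open Nat in
theorem sum_range_choose_mul_renewal (τ : ℕ → ℕ) {n : ℕ}
    (hτ : τ n = ∑ j ∈ range n, (n - j + 1) * τ j) :
    ∑ j ∈ range (n + 1), n.choose j * (τ j * j ! * (n - j + 1)!) = 2 * (τ n * n !) := by
  have hterm : ∀ j ∈ range (n + 1),
      n.choose j * (τ j * j ! * (n - j + 1)!) = (n - j + 1) * τ j * n ! := by
    intro j hj
    rw [factorial_succ, ← choose_mul_factorial_mul_factorial (mem_range_succ_iff.1 hj)]
    ring
  rw [sum_congr rfl hterm, sum_range_succ, ← sum_mul, ← hτ, Nat.sub_self]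
  ring

theorem stmt_13_general (τ : ℕ → ℕ)
    (hrec : ∀ k : ℕ, 1 ≤ k → τ k = ∑ j ∈ Finset.range k, (k - j + 1) * τ j)
    (m : ℕ →₀ ℕ) (hm : m ≠ 0) :
    ∑ w ∈ (Finset.Iic m).erase m,
        τ (deg w) * Nat.factorial (deg w) *
          Nat.factorial (deg m - deg w + 1) * mchoose m w
      = τ (deg m) * Nat.factorial (deg m) := by
  have hdeg : 1 ≤ deg m := Nat.one_le_iff_ne_zero.2 (deg_eq_zero_iff.not.2 hm)
  have htotal := sum_Iic_mchoose_smul m fun j => τ j * j.factorial * (deg m - j + 1).factorial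
  simp only [smul_eq_mul] at htotal
  rw [sum_range_choose_mul_renewal τ (hrec _ hdeg), ← add_sum_erase _ _ (mem_Iic.2 le_rfl),
    mchoose_self, one_mul, Nat.sub_self, zero_add, Nat.factorial_one, mul_one] at htotal
  simp only [mul_comm (mchoose m _)] at htotal
  omega

theorem stmt_13 (τ : ℕ → ℕ) (h0 : τ 0 = 1)
    (hrec : ∀ k : ℕ, 1 ≤ k → τ k = ∑ j ∈ Finset.range k, (k - j + 1) * τ j)
    (m : ℕ →₀ ℕ) (hm : m ≠ 0) :
    ∑ w ∈ (Finset.Iic m).erase m,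
        τ (deg w) * Nat.factorial (deg w) *
          Nat.factorial (deg m - deg w + 1) * mchoose m w
      = τ (deg m) * Nat.factorial (deg m) :=
  stmt_13_general τ hrec m hm
end

section
/- For k,ℓ ∈ ℕ the two-dimensional Delannoy-type number D_2(k·e_i + ℓ·e_j) (with i ≠ j), defined by D_2(0)=1 and D_2(m) = Σ_{u ⊆ supp(m), 1 ≤ |u| ≤ 2} D_2(m − e_u), equals Σ_{t=0}^{min(k,ℓ)} 2^t · C(k,t) · C(ℓ,t). -/
/-!
Both sides satisfy the Delannoy recurrence `D(k+1, ℓ+1) = D(k, ℓ+1) + D(k+1, ℓ) + D(k, ℓ)` with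
all boundary values `D(k, 0) = D(0, ℓ) = 1`. For `D_2` this is the defining recursion, since the
support of `k e_i + ℓ e_j` with `k, ℓ ≥ 1` is `{i, j}`, whose nonempty subsets of size at most two
are `{i}`, `{j}` and `{i, j}`. For the binomial sum it follows from Pascal's rule applied once in
each variable.
-/

open Finset

noncomputable def eU (u : Finset ℕ) : ℕ →₀ ℕ := ∑ j ∈ u, Finsupp.single j 1

def delannoy (k l : ℕ) : ℕ := ∑ t ∈ range (k + 1), 2 ^ t * k.choose t * l.choose t

theorem delannoy_eq_sum_range_min (k l : ℕ) :
    delannoy k l = ∑ t ∈ range (min k l + 1), 2 ^ t * k.choose t * l.choose t := by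
  refine (sum_subset (range_subset_range.2 (by omega)) fun t _ ht => ?_).symm
  rcases Nat.lt_or_ge l t with h | h
  · simp [Nat.choose_eq_zero_of_lt h]
  · simp [Nat.choose_eq_zero_of_lt (show k < t by simp at ht; omega)]

@[simp] theorem delannoy_zero_left (l : ℕ) : delannoy 0 l = 1 := by simp [delannoy]

@[simp] theorem delannoy_zero_right (k : ℕ) : delannoy k 0 = 1 := by
  simp [delannoy_eq_sum_range_min]

theorem delannoy_succ_left (k l : ℕ) :
    delannoy (k + 1) l =
      delannoy k l + ∑ t ∈ range (k + 1), 2 ^ (t + 1) * k.choose t * l.choose (t + 1) := by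
  have shift : delannoy k l =
      ∑ t ∈ range (k + 1), 2 ^ (t + 1) * k.choose (t + 1) * l.choose (t + 1) + 1 := by
    rw [delannoy, sum_range_succ', sum_range_succ]
    simp
  rw [delannoy, sum_range_succ', shift]
  simp only [Nat.choose_succ_succ', add_mul, mul_add, sum_add_distrib]
  simp only [pow_zero, Nat.choose_zero_right, mul_one]
  ring

theorem delannoy_succ_succ (k l : ℕ) :
    delannoy (k + 1) (l + 1) = delannoy k (l + 1) + delannoy (k + 1) l + delannoy k l := by
  have hdiag : ∑ t ∈ range (k + 1), 2 ^ (t + 1) * k.choose t * l.choose t = 2 * delannoy k l := by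
    rw [delannoy, mul_sum]
    exact sum_congr rfl fun t _ => by ring
  rw [delannoy_succ_left k (l + 1), delannoy_succ_left k l]
  simp only [Nat.choose_succ_succ' l, mul_add, sum_add_distrib, hdiag]
  ring

theorem eq_delannoy_of_rec (f : ℕ → ℕ → ℕ) (h0l : ∀ l, f 0 l = 1) (hk0 : ∀ k, f k 0 = 1)
    (hsucc : ∀ k l, f (k + 1) (l + 1) = f k (l + 1) + f (k + 1) l + f k l) (k l : ℕ) :
    f k l = delannoy k l := by
  induction k generalizing l with
  | zero => simp [h0l]
  | succ k ihk =>
    induction l with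
    | zero => simp [hk0]
    | succ l ihl => rw [hsucc, ihk, ihk, ihl, delannoy_succ_succ]

theorem sum_filter_powerset_singleton (a : ℕ) (g : Finset ℕ → ℕ) :
    ∑ u ∈ ({a} : Finset ℕ).powerset.filter (fun u => 1 ≤ u.card ∧ u.card ≤ 2), g u = g {a} := by
  rw [sum_filter, ← insert_empty_eq, sum_powerset_insert (notMem_empty a)]
  simp

theorem sum_filter_powerset_pair {a b : ℕ} (hab : a ≠ b) (g : Finset ℕ → ℕ) :
    ∑ u ∈ ({a, b} : Finset ℕ).powerset.filter (fun u => 1 ≤ u.card ∧ u.card ≤ 2), g u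
      = g {a} + g {b} + g {a, b} := by
  rw [sum_filter, sum_powerset_insert (by simpa using hab), ← insert_empty_eq,
    sum_powerset_insert (notMem_empty b), sum_powerset_insert (notMem_empty b)]
  simp [hab]
  ring

theorem eU_singleton (a : ℕ) : eU {a} = Finsupp.single a 1 := by
  simp [eU]

theorem eU_pair {a b : ℕ} (hab : a ≠ b) : eU {a, b} = Finsupp.single a 1 + Finsupp.single b 1 := by
  rw [eU, sum_pair hab]

section Recursion

variable {D : (ℕ →₀ ℕ) → ℕ}
  (hDrec : ∀ m : ℕ →₀ ℕ, m ≠ 0 →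
    D m = ∑ u ∈ m.support.powerset.filter (fun u => 1 ≤ u.card ∧ u.card ≤ 2), D (m - eU u))
include hDrec

theorem apply_single_of_rec (hD0 : D 0 = 1) (a n : ℕ) : D (Finsupp.single a n) = 1 := by
  induction n with
  | zero => simpa using hD0
  | succ n ih =>
    rw [hDrec _ (by simp), Finsupp.support_single a n.succ_ne_zero,
      sum_filter_powerset_singleton, eU_singleton, ← Finsupp.single_tsub, Nat.add_sub_cancel, ih]

theorem apply_single_add_single_succ_succ_of_rec {i j : ℕ} (hij : i ≠ j) (k l : ℕ) :
    D (Finsupp.single i (k + 1) + Finsupp.single j (l + 1)) =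
      D (Finsupp.single i k + Finsupp.single j (l + 1)) +
        D (Finsupp.single i (k + 1) + Finsupp.single j l) +
          D (Finsupp.single i k + Finsupp.single j l) := by
  have hsupp : (Finsupp.single i (k + 1) + Finsupp.single j (l + 1)).support = {i, j} := by
    ext x
    simp only [Finsupp.mem_support_iff, Finsupp.add_apply, Finsupp.single_apply]
    grind
  rw [hDrec _ (by simp), hsupp,
    sum_filter_powerset_pair hij, eU_singleton, eU_singleton, eU_pair hij]
  congr 3 <;> ext x <;> simp only [Finsupp.tsub_apply, Finsupp.add_apply, Finsupp.single_apply]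
    <;> split_ifs <;> omega

end Recursion

theorem stmt_16 (D : (ℕ →₀ ℕ) → ℕ) (hD0 : D 0 = 1)
    (hDrec : ∀ m : ℕ →₀ ℕ, m ≠ 0 →
      D m = ∑ u ∈ m.support.powerset.filter (fun u => 1 ≤ u.card ∧ u.card ≤ 2),
        D (m - eU u))
    (i j : ℕ) (hij : i ≠ j) (k ℓ : ℕ) :
    D (Finsupp.single i k + Finsupp.single j ℓ)
      = ∑ t ∈ Finset.range (min k ℓ + 1), 2 ^ t * Nat.choose k t * Nat.choose ℓ t := by
  rw [← delannoy_eq_sum_range_min]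
  refine eq_delannoy_of_rec (fun k l => D (Finsupp.single i k + Finsupp.single j l)) ?_ ?_
    (apply_single_add_single_succ_succ_of_rec hDrec hij) k ℓ
  · simp [apply_single_of_rec hDrec hD0]
  · simp [apply_single_of_rec hDrec hD0]
end

section
/- Let A, B : F → ℝ be arbitrary functions on the set F of finitely supported multi-indices, and let ν ∈ F. Then Σ_{m ≤ ν} Σ_{w ≤ m} Σ_{μ ≤ ν−m} C(ν,m)·A(w)·B(μ)·Π_i S(m_i,w_i)·S(ν_i−m_i,μ_i) = Σ_{m ≤ ν} (Σ_{w ≤ m} C(m,w)·A(w)·B(m−w)) · Π_i S(ν_i,m_i). -/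
/-- Stirling numbers of the second kind. -/
def stirling : ℕ → ℕ → ℕ
  | 0, 0 => 1
  | 0, _ + 1 => 0
  | _ + 1, 0 => 0
  | n + 1, m + 1 => (m + 1) * stirling n (m + 1) + stirling n m

/-!
Coordinatewise, everything rests on the Stirling convolution
`∑ k, C(n, k) S(k, a) S(n - k, b) = C(a + b, a) S(n, a + b)`: a partition of an `n`-set into
`a + b` blocks, `a` of which are marked, is the same as a choice of a subset of size `k` together
with a partition of it into `a` blocks and a partition of its complement into `b` blocks. It is
proved by induction on `n` from Pascal's rule and the recurrence for `S`.

On the left, the sums over `w ≤ m` and `μ ≤ ν - m` may be extended to `w, μ ≤ ν`, since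
`S(n, k) = 0` for `k > n`; summing over `m` first, the convolution turns the left side into
`∑ w μ, A(w) B(μ) ∏ i, C(w_i + μ_i, w_i) S(ν_i, w_i + μ_i)`. Substituting `m = w + μ` on the right
gives the same sum.
-/

open Finset Nat

theorem stirling_eq_stirlingSecond : stirling = stirlingSecond := by
  funext n k
  induction n generalizing k with
  | zero => cases k <;> rfl
  | succ n ih => cases k <;> simp [stirling, stirlingSecond, ih]

theorem sum_antidiagonal_choose_mul_stirlingSecond (n a b : ℕ) :
    ∑ ij ∈ antidiagonal n, n.choose ij.1 * (stirlingSecond ij.1 a * stirlingSecond ij.2 b) =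
      (a + b).choose a * stirlingSecond n (a + b) := by
  induction n generalizing a b with
  | zero => cases a <;> cases b <;> simp [stirlingSecond]
  | succ n ih =>
    have choose_swap : ∀ f : ℕ × ℕ → ℕ, ∑ ij ∈ antidiagonal n, n.choose ij.2 * f ij =
        ∑ ij ∈ antidiagonal n, n.choose ij.1 * f ij := fun f => sum_congr rfl fun ij hij => by
      rw [choose_symm_of_eq_add (mem_antidiagonal.mp hij).symm]
    have succ_right : ∀ a b, ∑ ij ∈ antidiagonal n,
        n.choose ij.1 * (stirlingSecond ij.1 a * stirlingSecond (ij.2 + 1) (b + 1)) =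
          (b + 1) * ((a + (b + 1)).choose a * stirlingSecond n (a + (b + 1))) +
            (a + b).choose a * stirlingSecond n (a + b) := by
      intro a b
      rw [← ih, ← ih, mul_sum, ← sum_add_distrib]
      exact sum_congr rfl fun _ _ => by rw [stirlingSecond_succ_succ]; ring
    have succ_left : ∀ a b, ∑ ij ∈ antidiagonal n,
        n.choose ij.1 * (stirlingSecond (ij.1 + 1) (a + 1) * stirlingSecond ij.2 b) =
          (a + 1) * ((a + 1 + b).choose (a + 1) * stirlingSecond n (a + 1 + b)) +
            (a + b).choose a * stirlingSecond n (a + b) := by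
      intro a b
      rw [← ih, ← ih, mul_sum, ← sum_add_distrib]
      exact sum_congr rfl fun _ _ => by rw [stirlingSecond_succ_succ]; ring
    have pascal := sum_antidiagonal_choose_succ_mul (R := ℕ)
      (fun i j => stirlingSecond i a * stirlingSecond j b) n
    simp only [Nat.cast_id, choose_swap] at pascal
    rw [pascal]
    rcases a with _ | a <;> rcases b with _ | b
    · simp
    · rw [succ_right]
      simp [stirlingSecond_succ_succ]
    · rw [succ_left]
      simp [stirlingSecond_succ_succ]
    · rw [succ_left, succ_right, show a + 1 + (b + 1) = a + b + 1 + 1 by omega,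
        show a + 1 + b = a + b + 1 by omega, show a + (b + 1) = a + b + 1 by omega,
        choose_succ_succ', stirlingSecond_succ_succ]
      ring

theorem Finsupp.sum_Iic_prod {ι M : Type*} [DecidableEq ι] [CommSemiring M] (ν : ι →₀ ℕ)
    (g : ι → ℕ → M) :
    ∑ m ∈ Iic ν, ∏ i ∈ ν.support, g i (m i) = ∏ i ∈ ν.support, ∑ k ∈ Iic (ν i), g i k := by
  rw [prod_sum]
  refine sum_nbij' (fun m i _ => m i) (fun p => indicator ν.support p) ?_ ?_ ?_ ?_ ?_
  · intro m hm
    simpa [Finset.mem_pi] using fun i _ => (mem_Iic.mp hm) i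
  · intro p hp
    rw [Finset.mem_pi] at hp
    refine mem_Iic.mpr fun i => ?_
    by_cases hi : i ∈ ν.support
    · simpa [indicator_of_mem hi] using hp i hi
    · simp [indicator_of_notMem hi]
  · intro m hm
    ext i
    by_cases hi : i ∈ ν.support
    · rw [indicator_of_mem hi]
    · rw [indicator_of_notMem hi, eq_comm, ← notMem_support_iff]
      exact fun h => hi (support_mono (mem_Iic.mp hm) h)
  · intro p _
    funext i hi
    exact indicator_of_mem hi _
  · intro m _
    exact (prod_attach ν.support fun i => g i (m i)).symm

theorem Finset.sum_Iic_sum_Iic_eq_sum_Iic_sum_Iic_tsub {α M : Type*} [AddCommMonoid α]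
    [PartialOrder α] [CanonicallyOrderedAdd α] [IsOrderedCancelAddMonoid α] [Sub α]
    [OrderedSub α] [OrderBot α] [LocallyFiniteOrder α] [AddCommMonoid M] (ν : α)
    (f : α → α → M) :
    ∑ m ∈ Iic ν, ∑ w ∈ Iic m, f m w = ∑ w ∈ Iic ν, ∑ μ ∈ Iic (ν - w), f (w + μ) w := by
  rw [sum_comm' (t' := Iic ν) (s' := fun w => Icc w ν) fun m w => by
    simp only [mem_Iic, mem_Icc]
    exact ⟨fun ⟨h₁, h₂⟩ => ⟨⟨h₂, h₁⟩, h₂.trans h₁⟩, fun ⟨⟨h₂, h₁⟩, _⟩ => ⟨h₁, h₂⟩⟩]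
  refine sum_congr rfl fun w hw => ?_
  have : Icc w ν = (Iic (ν - w)).map (addLeftEmbedding w) := by
    rw [Iic_eq_Icc, bot_eq_zero, map_add_left_Icc, add_zero,
      add_tsub_cancel_of_le (mem_Iic.mp hw)]
  rw [this, sum_map]
  rfl

theorem Finset.sum_Iic_sum_Iic_sum_Iic_tsub_eq_of_eq_zero {α M : Type*} [AddCommMonoid α]
    [PartialOrder α] [CanonicallyOrderedAdd α] [Sub α] [OrderedSub α] [OrderBot α]
    [LocallyFiniteOrder α] [AddCommMonoid M] {ν : α} {f : α → α → α → M}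
    (hf : ∀ m w μ, w ≤ ν → μ ≤ ν → (¬w ≤ m ∨ ¬μ ≤ ν - m) → f m w μ = 0) :
    ∑ m ∈ Iic ν, ∑ w ∈ Iic m, ∑ μ ∈ Iic (ν - m), f m w μ =
      ∑ m ∈ Iic ν, ∑ w ∈ Iic ν, ∑ μ ∈ Iic ν, f m w μ := by
  refine sum_congr rfl fun m hm => ?_
  rw [sum_subset (Iic_subset_Iic.mpr (mem_Iic.mp hm)) fun w hw hwm => sum_eq_zero fun μ hμ =>
    hf m w μ (mem_Iic.mp hw) ((mem_Iic.mp hμ).trans tsub_le_self) (.inl (hwm ∘ mem_Iic.mpr))]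
  exact sum_congr rfl fun w hw => sum_subset (Iic_subset_Iic.mpr tsub_le_self) fun μ hμ hμm =>
    hf m w μ (mem_Iic.mp hw) (mem_Iic.mp hμ) (.inr (hμm ∘ mem_Iic.mpr))

theorem prod_stirlingSecond_eq_zero_of_not_le {ι : Type*} {s : Finset ι} {m w : ι →₀ ℕ}
    (hs : w.support ⊆ s) (h : ¬w ≤ m) : ∏ i ∈ s, stirlingSecond (m i) (w i) = 0 := by
  obtain ⟨i, hi, hlt⟩ : ∃ i ∈ w.support, m i < w i := by
    simpa [Finsupp.le_iff] using h
  exact prod_eq_zero (hs hi) (stirlingSecond_eq_zero_of_lt hlt)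

theorem mchoose_eq_prod_of_support_subset {m w : ℕ →₀ ℕ} {s : Finset ℕ} (hw : w ≤ m)
    (hs : m.support ⊆ s) : mchoose m w = ∏ i ∈ s, (m i).choose (w i) := by
  refine prod_subset hs fun i _ hi => ?_
  have hm : m i = 0 := Finsupp.notMem_support_iff.mp hi
  have hw0 : w i = 0 := Nat.le_zero.mp (hm ▸ hw i)
  rw [hm, hw0, choose_self]

theorem sum_Iic_mchoose_mul_prod_stirlingSecond (ν w μ : ℕ →₀ ℕ) :
    ∑ m ∈ Iic ν, mchoose ν m *
        ∏ i ∈ ν.support, (stirlingSecond (m i) (w i) * stirlingSecond (ν i - m i) (μ i)) =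
      ∏ i ∈ ν.support, (w i + μ i).choose (w i) * stirlingSecond (ν i) (w i + μ i) := by
  simp only [mchoose, ← prod_mul_distrib]
  rw [Finsupp.sum_Iic_prod ν fun i k =>
    (ν i).choose k * (stirlingSecond k (w i) * stirlingSecond (ν i - k) (μ i))]
  refine prod_congr rfl fun i _ => ?_
  rw [← Nat.range_succ_eq_Iic, ← Nat.sum_antidiagonal_eq_sum_range_succ
    (fun k l => (ν i).choose k * (stirlingSecond k (w i) * stirlingSecond l (μ i))),
    sum_antidiagonal_choose_mul_stirlingSecond]

section Rearrangement

variable {R : Type*} [CommSemiring R] (A B : (ℕ →₀ ℕ) → R) (ν : ℕ →₀ ℕ)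

theorem sum_Iic_sum_Iic_sum_Iic_mchoose_mul_stirlingSecond :
    ∑ m ∈ Iic ν, ∑ w ∈ Iic m, ∑ μ ∈ Iic (ν - m),
        (mchoose ν m : R) * A w * B μ *
          ∏ i ∈ ν.support, ((stirlingSecond (m i) (w i) * stirlingSecond (ν i - m i) (μ i) : ℕ) : R)
      = ∑ w ∈ Iic ν, ∑ μ ∈ Iic ν, A w * B μ *
          ((∏ i ∈ ν.support, (w i + μ i).choose (w i) * stirlingSecond (ν i) (w i + μ i) : ℕ) :
            R) := by
  rw [sum_Iic_sum_Iic_sum_Iic_tsub_eq_of_eq_zero fun m w μ hw hμ h => ?vanish, sum_comm]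
  case vanish =>
    suffices h0 : ∏ i ∈ ν.support, (stirlingSecond (m i) (w i) *
        stirlingSecond (ν i - m i) (μ i)) = 0 by
      rw [← Nat.cast_prod, h0, Nat.cast_zero, mul_zero]
    rw [prod_mul_distrib]
    rcases h with h | h
    · exact mul_eq_zero_of_left
        (prod_stirlingSecond_eq_zero_of_not_le (Finsupp.support_mono hw) h) _
    · exact mul_eq_zero_of_right _
        (prod_stirlingSecond_eq_zero_of_not_le (Finsupp.support_mono hμ) h)
  refine sum_congr rfl fun w _ => ?_
  rw [sum_comm]
  refine sum_congr rfl fun μ _ => ?_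
  rw [← sum_Iic_mchoose_mul_prod_stirlingSecond, Nat.cast_sum, mul_sum]
  refine sum_congr rfl fun m _ => ?_
  push_cast
  ring

theorem sum_Iic_sum_Iic_mchoose_mul_stirlingSecond :
    ∑ m ∈ Iic ν, (∑ w ∈ Iic m, (mchoose m w : R) * A w * B (m - w)) *
        ∏ i ∈ ν.support, ((stirlingSecond (ν i) (m i) : ℕ) : R)
      = ∑ w ∈ Iic ν, ∑ μ ∈ Iic ν, A w * B μ *
          ((∏ i ∈ ν.support, (w i + μ i).choose (w i) * stirlingSecond (ν i) (w i + μ i) : ℕ) :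
            R) := by
  simp only [sum_mul]
  rw [sum_Iic_sum_Iic_eq_sum_Iic_sum_Iic_tsub]
  refine sum_congr rfl fun w hw => ?_
  rw [mem_Iic] at hw
  rw [← sum_subset (Iic_subset_Iic.mpr (tsub_le_self : ν - w ≤ ν)) fun μ hμ hμw => ?vanish]
  case vanish =>
    rw [mem_Iic] at hμ
    have hsupp : (w + μ).support ⊆ ν.support := Finsupp.support_add.trans
      (union_subset (Finsupp.support_mono hw) (Finsupp.support_mono hμ))
    have hle : ¬w + μ ≤ ν := by rwa [← le_tsub_iff_left hw, ← mem_Iic]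
    have h0 := prod_stirlingSecond_eq_zero_of_not_le (m := ν) hsupp hle
    simp only [Finsupp.coe_add, Pi.add_apply] at h0
    rw [prod_mul_distrib, h0, mul_zero, Nat.cast_zero, mul_zero]
  refine sum_congr rfl fun μ hμ => ?_
  have hle : w + μ ≤ ν := by rw [← le_tsub_iff_left hw, ← mem_Iic]; exact hμ
  rw [add_tsub_cancel_left,
    mchoose_eq_prod_of_support_subset le_self_add (Finsupp.support_mono hle)]
  push_cast
  simp only [Pi.add_apply, prod_mul_distrib]
  ring

end Rearrangement

theorem stmt_17 (A B : (ℕ →₀ ℕ) → ℝ) (ν : ℕ →₀ ℕ) :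
    ∑ m ∈ Finset.Iic ν, ∑ w ∈ Finset.Iic m, ∑ μ ∈ Finset.Iic (ν - m),
        (mchoose ν m : ℝ) * A w * B μ *
          ∏ i ∈ ν.support,
            ((stirling (m i) (w i) * stirling (ν i - m i) (μ i) : ℕ) : ℝ)
      = ∑ m ∈ Finset.Iic ν,
          (∑ w ∈ Finset.Iic m, (mchoose m w : ℝ) * A w * B (m - w)) *
            ∏ i ∈ ν.support, ((stirling (ν i) (m i) : ℕ) : ℝ) := by
  rw [stirling_eq_stirlingSecond, sum_Iic_sum_Iic_sum_Iic_mchoose_mul_stirlingSecond,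
    sum_Iic_sum_Iic_mchoose_mul_stirlingSecond]
end
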